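/- arXiv:1901.01517 — 6 statements merged into one kernel-verified Lean document; each statement's English description precedes it below -/
import Mathlib

section
/- For all times t ≥ 0 and all nodes i ∈ 𝒩 and flows k ∈ 𝒦, the physical queue is dominated by the virtual queues: Q_{ik}(t) ≤ X_{ik}(t) + Σ_{j∈𝒩} Y_{ijk}(t) − Σ_{j∈𝒰} Y_{jik}(t). -/
/-!
Let `u(t) = a + Σⱼ gⱼᵢ − Σⱼ gᵢⱼ` be the increment the virtual queue `X` sees before reflection
at zero, so that `X(t+1) ≥ X(t) + u(t)`. The physical queue instead moves by the *executed* rates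
(`f̃` at uncontrollable nodes, `g` elsewhere), and the difference of the two increments is exactly
the change of `S = Σⱼ Yᵢⱼ − Σ_{j ∈ 𝒰} Yⱼᵢ`, because `Δ = g − executed` and `Δ` vanishes on
controllable senders. Hence `Q(t+1) − X(t+1) − S(t+1) ≤ Q(t) − X(t) − S(t)`, and this is `0` at `t = 0`.
-/

open Finset

theorem le_add_of_increment_le {q x s u : ℕ → ℝ} (h₀ : q 0 ≤ x 0 + s 0)
    (hq : ∀ t, q (t + 1) = q t + u t + (s (t + 1) - s t)) (hx : ∀ t, x t + u t ≤ x (t + 1)) :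
    ∀ t, q t ≤ x t + s t
  | 0 => h₀
  | t + 1 => by linarith [le_add_of_increment_le h₀ hq hx t, hq t, hx t]

section ExecutedRate

variable {Node : Type*} [DecidableEq Node] (U : Finset Node)

/-- The rate actually transmitted on link `i → j`. -/
def executedRate (g f : Node → Node → ℝ) (i j : Node) : ℝ :=
  if i ∈ U then f i j else g i j

variable {U}

theorem executedRate_of_mem {g f : Node → Node → ℝ} {i : Node} (hi : i ∈ U) :
    executedRate U g f i = f i := by
  ext j; simp [executedRate, hi]

theorem executedRate_of_notMem {g f : Node → Node → ℝ} {i : Node} (hi : i ∉ U) :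
    executedRate U g f i = g i := by
  ext j; simp [executedRate, hi]

theorem sum_executedRate_in [Fintype Node] (g f : Node → Node → ℝ) (i : Node) :
    ∑ j, executedRate U g f j i = (∑ j ∈ Uᶜ, g j i) + ∑ j ∈ U, f j i := by
  rw [← sum_compl_add_sum U]
  congr 1 <;> refine sum_congr rfl fun j hj => ?_
  · simp [executedRate, mem_compl.mp hj]
  · simp [executedRate, hj]

variable {g f Δ : Node → Node → ℝ}

theorem mismatch_eq_sub_executedRate
    (hΔ : ∀ i j, Δ i j = if i ∈ U then g i j - f i j else 0) (i j : Node) :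
    Δ i j = g i j - executedRate U g f i j := by
  by_cases hi : i ∈ U <;> simp [hΔ, executedRate, hi]

theorem sum_mismatch_in [Fintype Node]
    (hΔ : ∀ i j, Δ i j = if i ∈ U then g i j - f i j else 0) (i : Node) :
    ∑ j ∈ U, Δ j i = ∑ j, (g j i - executedRate U g f j i) := by
  rw [sum_subset (subset_univ U) fun j _ hj => by simp [hΔ, hj]]
  exact sum_congr rfl fun j _ => mismatch_eq_sub_executedRate hΔ j i

theorem executed_netflow_eq [Fintype Node]
    (hΔ : ∀ i j, Δ i j = if i ∈ U then g i j - f i j else 0) (i : Node) :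
    (∑ j, executedRate U g f j i) - ∑ j, executedRate U g f i j
      = (∑ j, g j i) - (∑ j, g i j) + ((∑ j, Δ i j) - ∑ j ∈ U, Δ j i) := by
  simp only [sum_mismatch_in hΔ, mismatch_eq_sub_executedRate hΔ i, sum_sub_distrib]
  ring

end ExecutedRate

theorem tmw_queue_domination_general
    {Node Flow : Type*} [Fintype Node] [DecidableEq Node]
    (U : Finset Node)  -- uncontrollable nodes; controllable nodes are `Uᶜ`
    (Q X : ℕ → Node → Flow → ℝ)
    (Y : ℕ → Node → Node → Flow → ℝ)
    (a : ℕ → Node → Flow → ℝ)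
    (g ftil : ℕ → Node → Node → Flow → ℝ)
    (Δ : ℕ → Node → Node → Flow → ℝ)
    (hΔ : ∀ t i j k, Δ t i j k = if i ∈ U then g t i j k - ftil t i j k else 0)
    (hQc : ∀ t i k, i ∉ U →
      Q (t+1) i k = Q t i k + a t i k + (∑ j ∈ Uᶜ, g t j i k) + (∑ j ∈ U, ftil t j i k)
        - ∑ j, g t i j k)
    (hQu : ∀ t i k, i ∈ U →
      Q (t+1) i k = Q t i k + a t i k + (∑ j ∈ Uᶜ, g t j i k) + (∑ j ∈ U, ftil t j i k)
        - ∑ j, ftil t i j k)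
    (hX0 : ∀ i k, X 0 i k = Q 0 i k)
    (hX : ∀ t i k,
      X (t+1) i k = max (X t i k + a t i k + (∑ j, g t j i k) - ∑ j, g t i j k) 0)
    (hY0 : ∀ i j k, Y 0 i j k = 0)
    (hY : ∀ t i j k, Y (t+1) i j k = Y t i j k + Δ t i j k) :
    ∀ t i k, Q t i k ≤ X t i k + (∑ j, Y t i j k) - ∑ j ∈ U, Y t j i k := by
  intro t i k
  rw [add_sub_assoc]
  refine le_add_of_increment_le (q := (Q · i k)) (x := (X · i k))
    (s := fun t => (∑ j, Y t i j k) - ∑ j ∈ U, Y t j i k)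
    (u := fun t => a t i k + ((∑ j, g t j i k) - ∑ j, g t i j k))
    (by simp [hX0, hY0]) (fun t => ?_)
    (fun t => by simpa only [hX, ← add_assoc, add_sub_assoc] using le_max_left _ 0) t
  set e := executedRate U (g t · · k) (ftil t · · k)
  have hQ : Q (t+1) i k = Q t i k + a t i k + ((∑ j, e j i) - ∑ j, e i j) := by
    rw [sum_executedRate_in]
    by_cases hi : i ∈ U
    · simp only [hQu t i k hi, e, executedRate_of_mem hi]; ring
    · simp only [hQc t i k hi, e, executedRate_of_notMem hi]; ring
  rw [hQ, executed_netflow_eq (hΔ t · · k) i]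
  simp only [hY, sum_add_distrib]
  ring

/-- Tracking-MaxWeight: the physical queue is dominated by the virtual queues. -/
theorem tmw_queue_domination
    {Node Flow : Type*} [Fintype Node] [DecidableEq Node] [Fintype Flow]
    (U : Finset Node)  -- uncontrollable nodes; controllable nodes are `Uᶜ`
    (Q X : ℕ → Node → Flow → ℝ)
    (Y : ℕ → Node → Node → Flow → ℝ)
    (a : ℕ → Node → Flow → ℝ)
    (g ftil : ℕ → Node → Node → Flow → ℝ)
    (Δ : ℕ → Node → Node → Flow → ℝ)
    (ha : ∀ t i k, 0 ≤ a t i k)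
    (hg : ∀ t i j k, 0 ≤ g t i j k)
    (hftil : ∀ t i j k, 0 ≤ ftil t i j k)
    (hΔ : ∀ t i j k, Δ t i j k = if i ∈ U then g t i j k - ftil t i j k else 0)
    (hQ0 : ∀ i k, 0 ≤ Q 0 i k)
    (hQc : ∀ t i k, i ∉ U →
      Q (t+1) i k = Q t i k + a t i k + (∑ j ∈ Uᶜ, g t j i k) + (∑ j ∈ U, ftil t j i k)
        - ∑ j, g t i j k)
    (hQu : ∀ t i k, i ∈ U →
      Q (t+1) i k = Q t i k + a t i k + (∑ j ∈ Uᶜ, g t j i k) + (∑ j ∈ U, ftil t j i k)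
        - ∑ j, ftil t i j k)
    (hX0 : ∀ i k, X 0 i k = Q 0 i k)
    (hX : ∀ t i k,
      X (t+1) i k = max (X t i k + a t i k + (∑ j, g t j i k) - ∑ j, g t i j k) 0)
    (hY0 : ∀ i j k, Y 0 i j k = 0)
    (hY : ∀ t i j k, Y (t+1) i j k = Y t i j k + Δ t i j k) :
    ∀ t i k, Q t i k ≤ X t i k + (∑ j, Y t i j k) - ∑ j ∈ U, Y t j i k :=
  tmw_queue_domination_general U Q X Y a g ftil Δ hΔ hQc hQu hX0 hX hY0 hY
end

section
/- Suppose T ≥ 1 is an integer with Σ_{s∈S} n_L(s) ≤ T, and every episode ℓ ∈ {1, …, L−1} ends by the doubling criterion, i.e., for each such ℓ there exists s ∈ S with v_ℓ(s) ≥ max{1, n_ℓ(s)}. Then the total number of episodes satisfies L ≤ 1 + |S| (log₂ T + 1). -/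
/-!
Charge every episode `ℓ < L` to a state `s` whose visit count doubled during it. For a fixed
state, each charged episode at least doubles its cumulative count (and makes it positive), so
`k` charged episodes force `2 ^ k ≤ max 1 (2 n_L(s)) ≤ max 1 (2 T)`, i.e. `k ≤ log₂ T + 1`.
Summing over the `|S|` states bounds the `L - 1` charged episodes.
-/

open Finset

theorem card_le_sum_card_filter {ι α : Type*} [DecidableEq α] (s : Finset α) (t : Finset ι)
    (p : ι → α → Prop) [∀ i, DecidablePred (p i)] (h : ∀ a ∈ s, ∃ i ∈ t, p i a) :
    #s ≤ ∑ i ∈ t, #{a ∈ s | p i a} := by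
  refine (card_le_card fun a ha => ?_).trans card_biUnion_le
  obtain ⟨i, hi, hpa⟩ := h a ha
  exact mem_biUnion.2 ⟨i, hi, mem_filter.2 ⟨ha, hpa⟩⟩

theorem two_pow_card_le_of_doubling {N : ℕ → ℕ} (hN : Monotone N) (t : Finset ℕ)
    (hdouble : ∀ ℓ ∈ t, max 1 (2 * N ℓ) ≤ N (ℓ + 1)) {m : ℕ} (htm : ∀ ℓ ∈ t, ℓ < m) :
    2 ^ #t ≤ max 1 (2 * N m) := by
  induction t using Finset.induction_on_max generalizing m with
  | empty => simp
  | insert a t hlt ih =>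
    have hprev := ih (fun ℓ hℓ => hdouble ℓ (mem_insert_of_mem hℓ)) hlt
    have ha := hdouble a (mem_insert_self a t)
    have hNm : N (a + 1) ≤ N m := hN (htm a (mem_insert_self a t))
    rw [card_insert_of_notMem fun h => (hlt a h).false, pow_succ]
    omega

theorem two_pow_card_doubling_le (v : ℕ → ℕ) (L : ℕ) :
    2 ^ #{ℓ ∈ Ico 1 L | max 1 (∑ i ∈ Ico 1 ℓ, v i) ≤ v ℓ} ≤ max 1 (2 * ∑ i ∈ Ico 1 L, v i) := by
  refine two_pow_card_le_of_doubling (N := fun m => ∑ i ∈ Ico 1 m, v i)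
    (fun a b hab => sum_le_sum_of_subset (Ico_subset_Ico_right hab)) _ (fun ℓ hℓ => ?_)
    (fun ℓ hℓ => (mem_Ico.1 (mem_filter.1 hℓ).1).2)
  obtain ⟨hℓ, hv⟩ := mem_filter.1 hℓ
  simp only [sum_Ico_succ_top (mem_Ico.1 hℓ).1]
  omega

theorem le_logb_add_one_of_two_pow_le {k n T : ℕ} (hk : 2 ^ k ≤ max 1 (2 * n)) (hnT : n ≤ T) :
    (k : ℝ) ≤ Real.logb 2 T + 1 := by
  have hlog : k ≤ Nat.log 2 n + 1 := by
    rcases Nat.eq_zero_or_pos k with rfl | hk0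
    · omega
    · have hn : n ≠ 0 := by
        intro hn
        have : 2 ≤ 2 ^ k := Nat.le_self_pow hk0.ne' 2
        omega
      rw [← Nat.log_mul_base one_lt_two hn]
      exact Nat.le_log_of_pow_le one_lt_two (by omega)
  calc (k : ℝ) ≤ Nat.log 2 n + 1 := by exact_mod_cast hlog
    _ ≤ Nat.log 2 T + 1 := by gcongr
    _ ≤ Real.logb 2 T + 1 := by gcongr; exact Real.natLog_le_logb T 2

theorem episode_count_bound_general
    {S : Type*} [Fintype S]
    (L : ℕ)
    (v n : ℕ → S → ℕ)
    (hn : ∀ ℓ s, n ℓ s = ∑ i ∈ Finset.Ico 1 ℓ, v i s)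
    (T : ℕ)
    (hTn : ∑ s, n L s ≤ T)
    (hdouble : ∀ ℓ ∈ Finset.Ico 1 L, ∃ s, v ℓ s ≥ max 1 (n ℓ s)) :
    (L : ℝ) ≤ 1 + (Fintype.card S : ℝ) * (Real.logb 2 T + 1) := by
  classical
  have hcharge : L ≤ 1 + ∑ s, #{ℓ ∈ Ico 1 L | max 1 (n ℓ s) ≤ v ℓ s} := by
    have := card_le_sum_card_filter (Ico 1 L) univ (fun s ℓ => max 1 (n ℓ s) ≤ v ℓ s)
      fun ℓ hℓ => (hdouble ℓ hℓ).imp fun s hs => ⟨mem_univ s, hs⟩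
    rw [Nat.card_Ico] at this
    omega
  have hstate (s : S) :
      (#{ℓ ∈ Ico 1 L | max 1 (n ℓ s) ≤ v ℓ s} : ℝ) ≤ Real.logb 2 T + 1 := by
    have hpow := two_pow_card_doubling_le (fun i => v i s) L
    simp only [← hn] at hpow
    exact le_logb_add_one_of_two_pow_le hpow
      ((single_le_sum (fun s _ => Nat.zero_le (n L s)) (mem_univ s)).trans hTn)
  calc (L : ℝ) ≤ 1 + ∑ s, (#{ℓ ∈ Ico 1 L | max 1 (n ℓ s) ≤ v ℓ s} : ℝ) := by
        exact_mod_cast hcharge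
    _ ≤ 1 + ∑ _s : S, (Real.logb 2 T + 1) := by gcongr with s; exact hstate s
    _ = 1 + (Fintype.card S : ℝ) * (Real.logb 2 T + 1) := by
        rw [sum_const, card_univ, nsmul_eq_mul]

/-- Bound on the total number of episodes under the doubling stopping criterion. -/
theorem episode_count_bound
    {S : Type*} [Fintype S] [Nonempty S]
    (L : ℕ) (hL : 1 ≤ L)
    (v n : ℕ → S → ℕ)
    (hn : ∀ ℓ s, n ℓ s = ∑ i ∈ Finset.Ico 1 ℓ, v i s)
    (T : ℕ) (hT : 1 ≤ T)
    (hTn : ∑ s, n L s ≤ T)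
    (hdouble : ∀ ℓ ∈ Finset.Ico 1 L, ∃ s, v ℓ s ≥ max 1 (n ℓ s)) :
    (L : ℝ) ≤ 1 + (Fintype.card S : ℝ) * (Real.logb 2 T + 1) :=
  episode_count_bound_general L v n hn T hTn hdouble
end

section
/- For any sequence of real numbers z_1, …, z_n satisfying 0 ≤ z_ℓ ≤ Z_{ℓ−1} for all ℓ, where Z_ℓ := max{1, Σ_{i=1}^{ℓ} z_i} (in particular Z_0 = 1), it holds that Σ_{ℓ=1}^{n} z_ℓ / √(Z_{ℓ−1}) ≤ (√2 + 1) √(Z_n). -/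
/-!
The sum telescopes against the potential `Φ(s) = (√2 + 1)(√(max 1 s) - 1) + min s 1` of the
partial sums `s`. Once the partial sums exceed `1`, the increment `z ≤ s` satisfies
`z / √s ≤ (√2 + 1)(√(s + z) - √s)`, because `√(s + z) + √s ≤ (√2 + 1)√s`; while they stay
below `1`, the term `min s 1` pays for `z` exactly. Finally `Φ(s) ≤ (√2 + 1)√(max 1 s)`.
-/

open Finset

theorem div_sqrt_le_sqrt_two_add_one_mul_sqrt_add_sub_sqrt {a z : ℝ} (ha : 0 < a) (hz : 0 ≤ z)
    (hza : z ≤ a) : z / √a ≤ (√2 + 1) * (√(a + z) - √a) := by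
  have hc : 0 < √a := Real.sqrt_pos.mpr ha
  have hcb : √a ≤ √(a + z) := Real.sqrt_le_sqrt (by linarith)
  have hb : √(a + z) ≤ √2 * √a := by
    rw [← Real.sqrt_mul zero_le_two]
    exact Real.sqrt_le_sqrt (by linarith)
  rw [div_le_iff₀ hc]
  calc z = (√(a + z) - √a) * (√(a + z) + √a) := by
        rw [mul_comm, ← sq_sub_sq, Real.sq_sqrt (by linarith), Real.sq_sqrt ha.le]
        ring
    _ ≤ (√(a + z) - √a) * ((√2 + 1) * √a) :=
        mul_le_mul_of_nonneg_left (by linarith) (sub_nonneg.mpr hcb)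
    _ = (√2 + 1) * (√(a + z) - √a) * √a := by ring

noncomputable def sqrtPotential (s : ℝ) : ℝ :=
  (√2 + 1) * (√(max 1 s) - 1) + min s 1

theorem sqrtPotential_zero : sqrtPotential 0 = 0 := by
  simp [sqrtPotential]

theorem sqrtPotential_le (s : ℝ) : sqrtPotential s ≤ (√2 + 1) * √(max 1 s) := by
  have : 0 ≤ √2 := Real.sqrt_nonneg 2
  have : min s 1 ≤ 1 := min_le_right s 1
  unfold sqrtPotential
  linarith

theorem div_sqrt_max_one_le_sqrtPotential_sub {s z : ℝ} (hz : 0 ≤ z)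
    (hzs : z ≤ max 1 s) : z / √(max 1 s) ≤ sqrtPotential (s + z) - sqrtPotential s := by
  unfold sqrtPotential
  rcases le_total 1 s with h1s | hs1
  · have key := div_sqrt_le_sqrt_two_add_one_mul_sqrt_add_sub_sqrt (by linarith) hz
      (hzs.trans_eq (max_eq_right h1s))
    rw [max_eq_right h1s, max_eq_right (by linarith), min_eq_right h1s,
      min_eq_right (by linarith)]
    linarith
  rw [max_eq_left hs1, Real.sqrt_one, div_one] at *
  rcases le_total 1 (s + z) with h1sz | hsz1
  · -- the part `s + z - 1` of `z` that lands above `1` is paid for by the square-root term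
    have key := div_sqrt_le_sqrt_two_add_one_mul_sqrt_add_sub_sqrt one_pos
      (sub_nonneg.mpr h1sz) (show s + z - 1 ≤ 1 by linarith)
    rw [add_sub_cancel, Real.sqrt_one, div_one] at key
    rw [max_eq_right h1sz, min_eq_left hs1, min_eq_right h1sz]
    linarith
  · rw [max_eq_left hsz1, Real.sqrt_one, min_eq_left hs1, min_eq_left hsz1]
    linarith

theorem sum_div_sqrt_le_sqrtPotential (z : ℕ → ℝ) (n : ℕ)
    (hz : ∀ ℓ ∈ Icc 1 n, 0 ≤ z ℓ ∧ z ℓ ≤ max 1 (∑ i ∈ Icc 1 (ℓ - 1), z i)) :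
    ∑ ℓ ∈ Icc 1 n, z ℓ / √(max 1 (∑ i ∈ Icc 1 (ℓ - 1), z i))
      ≤ sqrtPotential (∑ i ∈ Icc 1 n, z i) := by
  induction n with
  | zero => simp [sqrtPotential_zero]
  | succ n ih =>
    have hz' : ∀ ℓ ∈ Icc 1 n, 0 ≤ z ℓ ∧ z ℓ ≤ max 1 (∑ i ∈ Icc 1 (ℓ - 1), z i) :=
      fun ℓ hℓ => hz ℓ (Icc_subset_Icc_right n.le_succ hℓ)
    obtain ⟨hzn, hzn_le⟩ := hz (n + 1) (right_mem_Icc.mpr n.succ_pos)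
    rw [Nat.add_sub_cancel] at hzn_le
    have step := div_sqrt_max_one_le_sqrtPotential_sub hzn hzn_le
    rw [sum_Icc_succ_top (by omega), sum_Icc_succ_top (by omega), Nat.add_sub_cancel]
    linarith [ih hz']

theorem sum_div_sqrt_partial_sums_bound_general
    (n : ℕ) (z : ℕ → ℝ)
    (Z : ℕ → ℝ)
    (hZ : ∀ ℓ, Z ℓ = max 1 (∑ i ∈ Finset.Icc 1 ℓ, z i))
    (hz : ∀ ℓ ∈ Finset.Icc 1 n, 0 ≤ z ℓ ∧ z ℓ ≤ Z (ℓ - 1)) :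
    ∑ ℓ ∈ Finset.Icc 1 n, z ℓ / Real.sqrt (Z (ℓ - 1))
      ≤ (Real.sqrt 2 + 1) * Real.sqrt (Z n) := by
  simp only [hZ] at hz ⊢
  exact (sum_div_sqrt_le_sqrtPotential z n hz).trans (sqrtPotential_le _)

/-- Lemma 19 of Jaksch et al.: for a sequence with `0 ≤ z_ℓ ≤ Z_{ℓ-1}` where
`Z_ℓ = max 1 (z_1 + ⋯ + z_ℓ)`, we have `∑ z_ℓ / √(Z_{ℓ-1}) ≤ (√2 + 1) √(Z_n)`. -/
theorem sum_div_sqrt_partial_sums_bound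
    (n : ℕ) (hn : 1 ≤ n) (z : ℕ → ℝ)
    (Z : ℕ → ℝ)
    (hZ : ∀ ℓ, Z ℓ = max 1 (∑ i ∈ Finset.Icc 1 ℓ, z i))
    (hz : ∀ ℓ ∈ Finset.Icc 1 n, 0 ≤ z ℓ ∧ z ℓ ≤ Z (ℓ - 1)) :
    ∑ ℓ ∈ Finset.Icc 1 n, z ℓ / Real.sqrt (Z (ℓ - 1))
      ≤ (Real.sqrt 2 + 1) * Real.sqrt (Z n) :=
  sum_div_sqrt_partial_sums_bound_general n z Z hZ hz
end

section
/- Suppose v_ℓ(s) ≤ max{1, n_ℓ(s)} for every episode ℓ ∈ {1, …, L} and every s ∈ S. Let n(s) = Σ_{ℓ=1}^{L} v_ℓ(s) and T = Σ_{s∈S} n(s). Then Σ_{s∈S} Σ_{ℓ=1}^{L} v_ℓ(s) / √(max{1, n_ℓ(s)}) ≤ (√2 + 1) Σ_{s∈S} √(n(s)) ≤ (√2 + 1) √(|S| · T). -/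
open Finset

/-! The increment `z / √(max 1 x)` at cumulative count `x` is at most `(√2 + 1)` times the growth
`√(x + z) - √x` of the square root, because `√(x + z) + √x ≤ (√2 + 1) √(max 1 x)` once
`z ≤ max 1 x`. Summed over episodes this telescopes to `(√2 + 1) √(n(s))` for each `s`, and
Cauchy–Schwarz bounds `∑ₛ √(n(s))` by `√(|S| T)`. -/

theorem div_sqrt_max_one_le_mul_sqrt_add_sub_sqrt {x z : ℝ} (hx : 0 ≤ x) (hz : 0 ≤ z)
    (hzx : z ≤ max 1 x) :
    z / √(max 1 x) ≤ (√2 + 1) * (√(x + z) - √x) := by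
  set m := max 1 x
  have hm : 0 < √m := Real.sqrt_pos.2 (lt_of_lt_of_le one_pos (le_max_left 1 x))
  have hxm : x ≤ m := le_max_right 1 x
  have hgrowth : 0 ≤ √(x + z) - √x := sub_nonneg.2 (Real.sqrt_le_sqrt (by linarith))
  have hdiff : (√(x + z) - √x) * (√(x + z) + √x) = z := by
    rw [mul_comm, ← sq_sub_sq, Real.sq_sqrt (by linarith), Real.sq_sqrt hx]
    ring
  have hsum : √(x + z) + √x ≤ (√2 + 1) * √m := by
    have h2m : √(x + z) ≤ √2 * √m := by
      rw [← Real.sqrt_mul zero_le_two]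
      exact Real.sqrt_le_sqrt (by linarith)
    nlinarith [Real.sqrt_le_sqrt hxm]
  calc z / √m = (√(x + z) - √x) * ((√(x + z) + √x) / √m) := by rw [← mul_div_assoc, hdiff]
    _ ≤ (√(x + z) - √x) * (√2 + 1) := by
      gcongr
      rwa [div_le_iff₀ hm]
    _ = (√2 + 1) * (√(x + z) - √x) := mul_comm _ _

theorem sum_div_sqrt_max_one_prefix_sum_le (v : ℕ → ℝ) (hv₀ : ∀ ℓ, 0 ≤ v ℓ) (L : ℕ)
    (hv : ∀ ℓ ∈ Icc 1 L, v ℓ ≤ max 1 (∑ i ∈ Ico 1 ℓ, v i)) :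
    ∑ ℓ ∈ Icc 1 L, v ℓ / √(max 1 (∑ i ∈ Ico 1 ℓ, v i))
      ≤ (√2 + 1) * √(∑ ℓ ∈ Icc 1 L, v ℓ) := by
  set P : ℕ → ℝ := fun ℓ => ∑ i ∈ Ico 1 ℓ, v i
  have hP : ∀ ℓ ∈ Icc 1 L, P (ℓ + 1) = P ℓ + v ℓ := fun ℓ hℓ =>
    sum_Ico_succ_top (mem_Icc.1 hℓ).1 v
  calc ∑ ℓ ∈ Icc 1 L, v ℓ / √(max 1 (P ℓ))
      ≤ ∑ ℓ ∈ Icc 1 L, (√2 + 1) * (√(P (ℓ + 1)) - √(P ℓ)) := by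
        refine sum_le_sum fun ℓ hℓ => ?_
        rw [hP ℓ hℓ]
        exact div_sqrt_max_one_le_mul_sqrt_add_sub_sqrt
          (sum_nonneg fun i _ => hv₀ i) (hv₀ ℓ) (hv ℓ hℓ)
    _ = (√2 + 1) * √(P (L + 1)) := by
        rw [← mul_sum, ← Ico_add_one_right_eq_Icc, sum_Ico_sub (f := fun ℓ => √(P ℓ)) (by omega)]
        simp [P]
    _ = (√2 + 1) * √(∑ ℓ ∈ Icc 1 L, v ℓ) := by rw [← Ico_add_one_right_eq_Icc]

theorem sum_sqrt_le_sqrt_card_mul_sum {ι : Type*} (s : Finset ι) {f : ι → ℝ}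
    (hf : ∀ i, 0 ≤ f i) :
    ∑ i ∈ s, √(f i) ≤ √(#s * ∑ i ∈ s, f i) := by
  simpa [Real.sqrt_mul (Nat.cast_nonneg _)] using
    Real.sum_sqrt_mul_sqrt_le s (fun _ => zero_le_one) hf

theorem visit_count_sqrt_bound_general
    {S : Type*} [Fintype S]
    (L : ℕ) (v n : ℕ → S → ℕ)
    (hn : ∀ ℓ s, n ℓ s = ∑ i ∈ Finset.Ico 1 ℓ, v i s)
    (hv : ∀ ℓ ∈ Finset.Icc 1 L, ∀ s : S, v ℓ s ≤ max 1 (n ℓ s))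
    (ntot : S → ℕ) (hntot : ∀ s, ntot s = ∑ ℓ ∈ Finset.Icc 1 L, v ℓ s)
    (T : ℕ) (hT : T = ∑ s, ntot s) :
    (∑ s, ∑ ℓ ∈ Finset.Icc 1 L, (v ℓ s : ℝ) / Real.sqrt ((max 1 (n ℓ s) : ℕ) : ℝ)
      ≤ (Real.sqrt 2 + 1) * ∑ s, Real.sqrt ((ntot s : ℝ))) ∧
    ((Real.sqrt 2 + 1) * ∑ s, Real.sqrt ((ntot s : ℝ))
      ≤ (Real.sqrt 2 + 1) * Real.sqrt ((Fintype.card S : ℝ) * (T : ℝ))) := by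
  constructor
  · rw [mul_sum]
    refine sum_le_sum fun s _ => ?_
    have hv_s : ∀ ℓ ∈ Icc 1 L, (v ℓ s : ℝ) ≤ max 1 (∑ i ∈ Ico 1 ℓ, (v i s : ℝ)) := by
      intro ℓ hℓ
      exact_mod_cast hn ℓ s ▸ hv ℓ hℓ s
    simpa [hn, hntot] using
      sum_div_sqrt_max_one_prefix_sum_le (fun ℓ => (v ℓ s : ℝ)) (fun _ => Nat.cast_nonneg _) L hv_s
  · gcongr
    rw [hT, Nat.cast_sum, ← card_univ]
    exact sum_sqrt_le_sqrt_card_mul_sum univ fun _ => Nat.cast_nonneg _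

/-- Visit-count bound: `∑_s ∑_ℓ v_ℓ(s) / √(max 1 (n_ℓ(s))) ≤ (√2+1) ∑_s √(n(s))
  ≤ (√2+1) √(|S| T)`. -/
theorem visit_count_sqrt_bound
    {S : Type*} [Fintype S] [Nonempty S]
    (L : ℕ) (v n : ℕ → S → ℕ)
    (hn : ∀ ℓ s, n ℓ s = ∑ i ∈ Finset.Ico 1 ℓ, v i s)
    (hv : ∀ ℓ ∈ Finset.Icc 1 L, ∀ s : S, v ℓ s ≤ max 1 (n ℓ s))
    (ntot : S → ℕ) (hntot : ∀ s, ntot s = ∑ ℓ ∈ Finset.Icc 1 L, v ℓ s)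
    (T : ℕ) (hT : T = ∑ s, ntot s) :
    (∑ s, ∑ ℓ ∈ Finset.Icc 1 L, (v ℓ s : ℝ) / Real.sqrt ((max 1 (n ℓ s) : ℕ) : ℝ)
      ≤ (Real.sqrt 2 + 1) * ∑ s, Real.sqrt ((ntot s : ℝ))) ∧
    ((Real.sqrt 2 + 1) * ∑ s, Real.sqrt ((ntot s : ℝ))
      ≤ (Real.sqrt 2 + 1) * Real.sqrt ((Fintype.card S : ℝ) * (T : ℝ))) :=
  visit_count_sqrt_bound_general L v n hn hv ntot hntot T hT
end

section
/- The total number of dropped packets satisfies Σ_{t=0}^{T−1} d(t) ≤ N·D · B / (V − N·D). Consequently, if the total number of exogenous arrivals over the horizon is A > 0, the fraction of dropped packets satisfies (Σ_{t=0}^{T−1} d(t)) / A ≤ N·D · B / ((V − N·D) · A). -/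
/-!
A slot drops packets only when its queue is at least `V - N D`, and then drops at most `N D`;
so in every slot `d(t) ≤ N D / (V - N D) · q(t)`. Summing over the horizon bounds the total drop
by `N D / (V - N D)` times the cumulative queue length.
-/

open Finset

theorem le_div_mul_of_le_of_eq_zero_of_lt {c θ q d : ℝ} (hc : 0 ≤ c) (hθ : 0 < θ) (hq : 0 ≤ q)
    (hd : d ≤ c) (hvanish : q < θ → d = 0) : d ≤ c / θ * q := by
  rcases lt_or_ge q θ with hlt | hge
  · rw [hvanish hlt]
    positivity
  · calc d ≤ c := hd
      _ = c / θ * θ := (div_mul_cancel₀ c hθ.ne').symm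
      _ ≤ c / θ * q := by gcongr

theorem sum_le_mul_div_of_le_of_eq_zero_of_lt {ι : Type*} (s : Finset ι) {q d : ι → ℝ}
    {c θ B : ℝ} (hc : 0 ≤ c) (hθ : 0 < θ) (hq : ∀ t ∈ s, 0 ≤ q t) (hd : ∀ t ∈ s, d t ≤ c)
    (hvanish : ∀ t ∈ s, q t < θ → d t = 0) (hB : ∑ t ∈ s, q t ≤ B) :
    ∑ t ∈ s, d t ≤ c * B / θ :=
  calc ∑ t ∈ s, d t ≤ ∑ t ∈ s, c / θ * q t :=
        sum_le_sum fun t ht ↦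
          le_div_mul_of_le_of_eq_zero_of_lt hc hθ (hq t ht) (hd t ht) (hvanish t ht)
    _ = c / θ * ∑ t ∈ s, q t := (mul_sum s q (c / θ)).symm
    _ ≤ c / θ * B := by gcongr
    _ = c * B / θ := div_mul_eq_mul_div c θ B

theorem packet_dropping_bound_general
    (T N : ℕ)
    (D V B : ℝ) (hD : 0 < D) (hV : (N : ℝ) * D < V)
    (q d : ℕ → ℝ)
    (hq : ∀ t < T, 0 ≤ q t)
    (hdND : ∀ t < T, d t ≤ (N : ℝ) * D)
    (hdrop : ∀ t < T, q t < V - (N : ℝ) * D → d t = 0)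
    (hQB : ∑ t ∈ Finset.range T, q t ≤ B) :
    (∑ t ∈ Finset.range T, d t ≤ (N : ℝ) * D * B / (V - (N : ℝ) * D)) ∧
    (∀ A : ℝ, 0 < A →
      (∑ t ∈ Finset.range T, d t) / A ≤ (N : ℝ) * D * B / ((V - (N : ℝ) * D) * A)) := by
  have hsum : ∑ t ∈ range T, d t ≤ (N : ℝ) * D * B / (V - (N : ℝ) * D) :=
    sum_le_mul_div_of_le_of_eq_zero_of_lt (range T) (by positivity) (sub_pos.mpr hV)
      (fun t ht ↦ hq t (mem_range.mp ht)) (fun t ht ↦ hdND t (mem_range.mp ht))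
      (fun t ht ↦ hdrop t (mem_range.mp ht)) hQB
  refine ⟨hsum, fun A hA ↦ ?_⟩
  rw [← div_div]
  exact div_le_div_of_nonneg_right hsum hA.le

/-- Packet-dropping bound for the truncated system. -/
theorem packet_dropping_bound
    (T N : ℕ) (hT : 1 ≤ T) (hN : 1 ≤ N)
    (D V B : ℝ) (hD : 0 < D) (hV : (N : ℝ) * D < V) (hB : 0 ≤ B)
    (q d : ℕ → ℝ)
    (hq : ∀ t < T, 0 ≤ q t)
    (hd0 : ∀ t < T, 0 ≤ d t)
    (hdND : ∀ t < T, d t ≤ (N : ℝ) * D)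
    (hdrop : ∀ t < T, q t < V - (N : ℝ) * D → d t = 0)
    (hQB : ∑ t ∈ Finset.range T, q t ≤ B) :
    (∑ t ∈ Finset.range T, d t ≤ (N : ℝ) * D * B / (V - (N : ℝ) * D)) ∧
    (∀ A : ℝ, 0 < A →
      (∑ t ∈ Finset.range T, d t) / A ≤ (N : ℝ) * D * B / ((V - (N : ℝ) * D) * A)) :=
  packet_dropping_bound_general T N D V B hD hV q d hq hdND hdrop hQB
end

section
/- Under these hypotheses, the probability that at least one of the events occurs satisfies P(∪_{ℓ∈L} E_ℓ) ≤ 1/(V^{N+1} A) + 2/V. -/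
open MeasureTheory Finset

/-! Union bound. The distinguished episode contributes at most `1/(V^{N+1} A)`; each of the
other at most `V^N A (log₂ T + 1)` episodes starts after `log₂ T`, so contributes at most
`1/(log₂ T · V^{N+1} A)`. Together they give `(1 + 1/log₂ T)/V ≤ 2/V`, as `log₂ T ≥ 1`. -/

theorem MeasureTheory.measure_biUnion_finset_le_ofReal_sum {Ω ι : Type*} [MeasurableSpace Ω]
    {μ : Measure Ω} {s : Finset ι} {E : ι → Set Ω} {f : ι → ℝ} (hf : ∀ i ∈ s, 0 ≤ f i)
    (hE : ∀ i ∈ s, μ (E i) ≤ ENNReal.ofReal (f i)) :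
    μ (⋃ i ∈ s, E i) ≤ ENNReal.ofReal (∑ i ∈ s, f i) :=
  calc μ (⋃ i ∈ s, E i) ≤ ∑ i ∈ s, μ (E i) := measure_biUnion_finset_le s E
    _ ≤ ∑ i ∈ s, ENNReal.ofReal (f i) := sum_le_sum hE
    _ = ENNReal.ofReal (∑ i ∈ s, f i) := (ENNReal.ofReal_sum_of_nonneg hf).symm

theorem Finset.sum_le_add_card_sub_one_mul {ι : Type*} [DecidableEq ι] {s : Finset ι} {i : ι}
    (hi : i ∈ s) {f : ι → ℝ} {a b : ℝ} (hfi : f i ≤ a) (hf : ∀ j ∈ s, j ≠ i → f j ≤ b) :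
    ∑ j ∈ s, f j ≤ a + ((#s : ℝ) - 1) * b := by
  have hcard : ((#(s.erase i) : ℕ) : ℝ) = #s - 1 := by
    rw [card_erase_of_mem hi, Nat.cast_pred (card_pos.mpr ⟨i, hi⟩)]
  rw [← add_sum_erase s f hi, ← hcard, ← nsmul_eq_mul]
  exact add_le_add hfi <| sum_le_card_nsmul _ _ _ fun j hj ↦
    hf j (mem_of_mem_erase hj) (ne_of_mem_erase hj)

theorem Real.one_le_logb_two {x : ℝ} (hx : 2 ≤ x) : 1 ≤ Real.logb 2 x := by
  rw [Real.le_logb_iff_rpow_le one_lt_two (by linarith), Real.rpow_one]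
  exact hx

theorem confidence_union_bound_general
    {Ω : Type*} [MeasurableSpace Ω] (μ : Measure Ω)
    (T V A N : ℕ) (hT : 2 ≤ T) (hV : 1 ≤ V) (hA : 1 ≤ A)
    {ι : Type*} (L : Finset ι)
    (t : ι → ℕ) (ht : ∀ ℓ ∈ L, 1 ≤ t ℓ)
    (ℓ' : ι) (hℓ' : ℓ' ∈ L)
    (htlog : ∀ ℓ ∈ L, ℓ ≠ ℓ' → Real.logb 2 (T : ℝ) ≤ (t ℓ : ℝ))
    (E : ι → Set Ω)
    (hPE : ∀ ℓ ∈ L,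
      μ (E ℓ) ≤ ENNReal.ofReal (1 / ((t ℓ : ℝ) * (V : ℝ) ^ (N + 1) * (A : ℝ))))
    (hcard : (L.card : ℝ) ≤ 1 + (V : ℝ) ^ N * (A : ℝ) * (Real.logb 2 (T : ℝ) + 1)) :
    μ (⋃ ℓ ∈ L, E ℓ)
      ≤ ENNReal.ofReal (1 / ((V : ℝ) ^ (N + 1) * (A : ℝ)) + 2 / (V : ℝ)) := by
  classical
  set c := Real.logb 2 (T : ℝ)
  have hc : 1 ≤ c := Real.one_le_logb_two (by exact_mod_cast hT)
  have hVpos : (0 : ℝ) < V := by exact_mod_cast hV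
  have hApos : (0 : ℝ) < A := by exact_mod_cast hA
  refine (measure_biUnion_finset_le_ofReal_sum (fun ℓ _ ↦ by positivity) hPE).trans
    (ENNReal.ofReal_le_ofReal ?_)
  have ht' : (1 : ℝ) ≤ t ℓ' := by exact_mod_cast ht ℓ' hℓ'
  calc ∑ ℓ ∈ L, 1 / ((t ℓ : ℝ) * V ^ (N + 1) * A)
      ≤ 1 / (V ^ (N + 1) * A) + ((#L : ℝ) - 1) * (1 / (c * V ^ (N + 1) * A)) := by
        refine sum_le_add_card_sub_one_mul hℓ' ?_ fun ℓ hℓ hne ↦ ?_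
        · rw [mul_assoc]
          exact one_div_le_one_div_of_le (by positivity) (le_mul_of_one_le_left (by positivity) ht')
        · have := htlog ℓ hℓ hne
          gcongr
    _ ≤ 1 / (V ^ (N + 1) * A) + V ^ N * A * (c + 1) * (1 / (c * V ^ (N + 1) * A)) := by
        gcongr
        linarith
    _ = 1 / (V ^ (N + 1) * A) + (1 + 1 / c) / V := by
        field_simp
        ring
    _ ≤ 1 / (V ^ (N + 1) * A) + 2 / V := by
        gcongr
        linarith [(div_le_one (by positivity : (0 : ℝ) < c)).mpr hc]

/-- Union-bound computation from the confidence-set lemma: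
`P(⋃_{ℓ∈L} E_ℓ) ≤ 1/(V^{N+1} A) + 2/V`. -/
theorem confidence_union_bound
    {Ω : Type*} [MeasurableSpace Ω] (μ : Measure Ω) [IsProbabilityMeasure μ]
    (T V A N : ℕ) (hT : 2 ≤ T) (hV : 1 ≤ V) (hA : 1 ≤ A) (hN : 1 ≤ N)
    {ι : Type*} [DecidableEq ι] (L : Finset ι) (hL : L.Nonempty)
    (t : ι → ℕ) (ht : ∀ ℓ ∈ L, 1 ≤ t ℓ)
    (ℓ' : ι) (hℓ' : ℓ' ∈ L)
    (htlog : ∀ ℓ ∈ L, ℓ ≠ ℓ' → Real.logb 2 (T : ℝ) ≤ (t ℓ : ℝ))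
    (E : ι → Set Ω) (hmeas : ∀ ℓ ∈ L, MeasurableSet (E ℓ))
    (hPE : ∀ ℓ ∈ L,
      μ (E ℓ) ≤ ENNReal.ofReal (1 / ((t ℓ : ℝ) * (V : ℝ) ^ (N + 1) * (A : ℝ))))
    (hcard : (L.card : ℝ) ≤ 1 + (V : ℝ) ^ N * (A : ℝ) * (Real.logb 2 (T : ℝ) + 1)) :
    μ (⋃ ℓ ∈ L, E ℓ)
      ≤ ENNReal.ofReal (1 / ((V : ℝ) ^ (N + 1) * (A : ℝ)) + 2 / (V : ℝ)) :=
  confidence_union_bound_general μ T V A N hT hV hA L t ht ℓ' hℓ' htlog E hPE hcard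
end
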